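/- arXiv:2008.09373 — 5 statements merged into one kernel-verified Lean document; each statement's English description precedes it below -/
import Mathlib

section
/- Every C² solution z : (-l, ∞) → ℝ (with l > 0) of the ODE -z'' - z'/(l + r) = e^z on (-l, ∞) satisfying z ≤ 0, z(0) = 0 and z'(0) = 0 is given explicitly by z(r) = log( 4A² l^{A+2} (r+l)^{A-2} / ((A+2) l^A + (A-2)(r+l)^A)² ), where A = √(2 l² + 4). -/
open Real Set Metric

/-!
With `s = r + l` the equation reads `z'' + z' / s + e ^ z = 0`, the radial Liouville equation
`Δz + e ^ z = 0` in the plane, whose solutions are explicit. The profile in the statement vanishes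
together with its derivative at `r = 0` for every `A > 2`, and it solves the equation precisely
when `A ^ 2 = 2 l ^ 2 + 4`. As a first-order system in `(z, z')` the equation has a vector field
that is locally Lipschitz in `(z, z')`, locally uniformly in `r > -l`, so uniqueness for the
initial value problem (Gronwall) identifies `z` with the profile.
-/

theorem eqOn_Ioi_of_hasDerivAt_of_lipschitzOnWith {E : Type*} [NormedAddCommGroup E]
    [NormedSpace ℝ E] {v : ℝ → E → E} {f g : ℝ → E} {c t₀ : ℝ}
    (hv : ∀ a b R, c < a → ∃ K, ∀ t ∈ Icc a b, LipschitzOnWith K (v t) (closedBall 0 R))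
    (ht₀ : c < t₀) (hf : ∀ t ∈ Ioi c, HasDerivAt f (v t (f t)) t)
    (hg : ∀ t ∈ Ioi c, HasDerivAt g (v t (g t)) t) (heq : f t₀ = g t₀) :
    EqOn f g (Ioi c) := by
  intro r hr
  set a := (c + min r t₀) / 2
  set b := max r t₀ + 1
  have hmin : c < min r t₀ := lt_min hr ht₀
  have hca : c < a := by simp only [a]; linarith
  have hab : Ioo a b ⊆ Icc a b := Ioo_subset_Icc_self
  have hc : Icc a b ⊆ Ioi c := fun t ht => hca.trans_le ht.1
  obtain ⟨Cf, hCf⟩ := isCompact_Icc.exists_bound_of_continuousOn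
    (HasDerivAt.continuousOn fun t ht => hf t (hc ht))
  obtain ⟨Cg, hCg⟩ := isCompact_Icc.exists_bound_of_continuousOn
    (HasDerivAt.continuousOn fun t ht => hg t (hc ht))
  obtain ⟨K, hK⟩ := hv a b (max Cf Cg) hca
  refine ODE_solution_unique_of_mem_Ioo (s := fun _ => closedBall 0 (max Cf Cg))
    (fun t ht => hK t (hab ht)) ?_ (fun t ht => ⟨hf t (hc (hab ht)), ?_⟩)
    (fun t ht => ⟨hg t (hc (hab ht)), ?_⟩) heq ?_
  · have := min_le_right r t₀; have := le_max_right r t₀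
    constructor <;> simp only [a, b] <;> linarith
  · exact mem_closedBall_zero_iff.2 ((hCf t (hab ht)).trans (le_max_left _ _))
  · exact mem_closedBall_zero_iff.2 ((hCg t (hab ht)).trans (le_max_right _ _))
  · have := min_le_left r t₀; have := le_max_left r t₀
    constructor <;> simp only [a, b] <;> linarith

noncomputable def radialField (F : ℝ → ℝ) (l t : ℝ) (p : ℝ × ℝ) : ℝ × ℝ :=
  (p.2, -F p.1 - (l + t)⁻¹ * p.2)

lemma radialField_lipschitzOnWith {F : ℝ → ℝ} (hF : LocallyLipschitz F) {l a : ℝ}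
    (ha : -l < a) (R : ℝ) :
    ∃ K, ∀ t ∈ Ici a, LipschitzOnWith K (radialField F l t) (closedBall 0 R) := by
  obtain ⟨KF, hKF⟩ := hF.locallyLipschitzOn.exists_lipschitzOnWith_of_compact
    (isCompact_closedBall (0 : ℝ) R)
  refine ⟨max 1 (KF + ‖(l + a)⁻¹‖₊), fun t ht => ?_⟩
  have hfst : LipschitzOnWith KF (fun p : ℝ × ℝ => F p.1) (closedBall 0 R) := by
    rw [← mul_one KF]
    exact hKF.comp LipschitzWith.prod_fst.lipschitzOnWith
      fun (p : ℝ × ℝ) hp =>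
        mem_closedBall_zero_iff.2 ((norm_fst_le p).trans (mem_closedBall_zero_iff.1 hp))
  have hsnd :
      LipschitzOnWith ‖(l + t)⁻¹‖₊ (fun p : ℝ × ℝ => (l + t)⁻¹ * p.2) (closedBall 0 R) := by
    rw [← mul_one ‖(l + t)⁻¹‖₊]
    exact ((lipschitzWith_smul (l + t)⁻¹).comp LipschitzWith.prod_snd).lipschitzOnWith
  have hinv : ‖(l + t)⁻¹‖₊ ≤ ‖(l + a)⁻¹‖₊ := by
    rw [← NNReal.coe_le_coe, coe_nnnorm, coe_nnnorm, Real.norm_eq_abs, Real.norm_eq_abs,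
      abs_of_pos (inv_pos.2 (by linarith [mem_Ici.1 ht])), abs_of_pos (inv_pos.2 (by linarith))]
    exact inv_anti₀ (by linarith) (by linarith [mem_Ici.1 ht])
  exact LipschitzWith.prod_snd.lipschitzOnWith.prodMk
    ((hfst.neg.sub hsnd).weaken (add_le_add le_rfl hinv))

noncomputable def explicitDenom (l A r : ℝ) : ℝ := (A + 2) * l ^ A + (A - 2) * (r + l) ^ A

noncomputable def explicitSol (l A r : ℝ) : ℝ :=
  log (4 * A ^ 2 * l ^ (A + 2) * (r + l) ^ (A - 2) / explicitDenom l A r ^ 2)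

noncomputable def explicitSolDeriv (l A r : ℝ) : ℝ :=
  (A - 2) / (r + l) - 2 * (A - 2) * A * (r + l) ^ (A - 1) / explicitDenom l A r

noncomputable def explicitSolDeriv2 (l A r : ℝ) : ℝ :=
  -((A - 2) / (r + l) ^ 2) - 2 * (A - 2) * A * (A - 1) * (r + l) ^ (A - 2) / explicitDenom l A r
    + 2 * (A - 2) ^ 2 * A ^ 2 * (r + l) ^ (2 * A - 2) / explicitDenom l A r ^ 2

section ExplicitSolution

variable {l A r : ℝ}

lemma explicitDenom_pos (hl : 0 < l) (hA : 2 < A) (hr : -l < r) : 0 < explicitDenom l A r := by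
  have hs : 0 < r + l := by linarith
  have : 0 < (A - 2) * (r + l) ^ A := mul_pos (by linarith) (rpow_pos_of_pos hs A)
  unfold explicitDenom
  positivity

lemma explicitDenom_zero (l A : ℝ) : explicitDenom l A 0 = 2 * A * l ^ A := by
  unfold explicitDenom; ring_nf

lemma explicitSol_eq (hl : 0 < l) (hA : 2 < A) (hr : -l < r) :
    explicitSol l A r =
      log (4 * A ^ 2 * l ^ (A + 2)) + (A - 2) * log (r + l) - 2 * log (explicitDenom l A r) := by
  have hs : 0 < r + l := by linarith
  have hC : 0 < 4 * A ^ 2 * l ^ (A + 2) := by positivity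
  have hD := explicitDenom_pos hl hA hr
  unfold explicitSol
  rw [log_div (by positivity) (by positivity), log_mul hC.ne' (rpow_pos_of_pos hs _).ne',
    log_rpow hs, log_pow]
  push_cast
  ring

lemma exp_explicitSol (hl : 0 < l) (hA : 2 < A) (hr : -l < r) :
    exp (explicitSol l A r) =
      4 * A ^ 2 * l ^ (A + 2) * (r + l) ^ (A - 2) / explicitDenom l A r ^ 2 := by
  have hs : 0 < r + l := by linarith
  have := explicitDenom_pos hl hA hr
  have := rpow_pos_of_pos hs (A - 2)
  exact exp_log (by positivity)

lemma explicitSol_zero (hl : 0 < l) (hA : 2 < A) : explicitSol l A 0 = 0 := by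
  have hsq : 4 * A ^ 2 * l ^ (A + 2) * (0 + l) ^ (A - 2) = (2 * A * l ^ A) ^ 2 := by
    rw [zero_add, mul_assoc, ← rpow_add hl, show A + 2 + (A - 2) = A * 2 by ring, rpow_mul hl.le,
      rpow_two]
    ring
  unfold explicitSol
  rw [hsq, explicitDenom_zero, div_self (by positivity), log_one]

lemma explicitSolDeriv_zero (hl : 0 < l) (hA : 2 < A) : explicitSolDeriv l A 0 = 0 := by
  have hpow : (0 + l) ^ (A - 1) = l ^ A / l := by rw [zero_add, rpow_sub hl, rpow_one]
  have := rpow_pos_of_pos hl A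
  unfold explicitSolDeriv
  rw [explicitDenom_zero, hpow]
  field_simp
  ring

lemma hasDerivAt_explicitDenom (hr : -l < r) :
    HasDerivAt (explicitDenom l A) ((A - 2) * (1 * A * (r + l) ^ (A - 1))) r := by
  have hs : 0 < r + l := by linarith
  exact ((((hasDerivAt_id r).add_const l).rpow_const (Or.inl hs.ne')).const_mul (A - 2)).const_add _

lemma hasDerivAt_explicitSol (hl : 0 < l) (hA : 2 < A) (hr : -l < r) :
    HasDerivAt (explicitSol l A) (explicitSolDeriv l A r) r := by
  have hs : 0 < r + l := by linarith
  have hlog : explicitSol l A =ᶠ[nhds r] fun x =>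
      log (4 * A ^ 2 * l ^ (A + 2)) + (A - 2) * log (x + l) - 2 * log (explicitDenom l A x) := by
    filter_upwards [isOpen_Ioi.mem_nhds (mem_Ioi.2 hr)] with x hx
    exact explicitSol_eq hl hA hx
  rw [hlog.hasDerivAt_iff]
  have h1 : HasDerivAt (fun x => log (x + l)) (1 / (r + l)) r := by
    simpa using ((hasDerivAt_id r).add_const l).log hs.ne'
  have h2 := (hasDerivAt_explicitDenom (A := A) hr).log (explicitDenom_pos hl hA hr).ne'
  convert ((h1.const_mul (A - 2)).const_add (log (4 * A ^ 2 * l ^ (A + 2)))).sub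
    (h2.const_mul 2) using 1
  · rfl
  unfold explicitSolDeriv
  ring

lemma hasDerivAt_explicitSolDeriv (hl : 0 < l) (hA : 2 < A) (hr : -l < r) :
    HasDerivAt (explicitSolDeriv l A) (explicitSolDeriv2 l A r) r := by
  have hs : 0 < r + l := by linarith
  have hD := explicitDenom_pos hl hA hr
  have h1 : HasDerivAt (fun x => (A - 2) / (x + l))
      ((0 * (r + l) - (A - 2) * 1) / (r + l) ^ 2) r :=
    (hasDerivAt_const r (A - 2)).div ((hasDerivAt_id r).add_const l) hs.ne'
  have hnum : HasDerivAt (fun x => 2 * (A - 2) * A * (x + l) ^ (A - 1))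
      (2 * (A - 2) * A * (1 * (A - 1) * (r + l) ^ (A - 1 - 1))) r :=
    (((hasDerivAt_id r).add_const l).rpow_const (Or.inl hs.ne')).const_mul _
  refine (h1.sub (hnum.div (hasDerivAt_explicitDenom hr) hD.ne')).congr_deriv ?_
  unfold explicitSolDeriv2
  rw [show A - 1 - 1 = A - 2 by ring, show 2 * A - 2 = (A - 1) + (A - 1) by ring, rpow_add hs]
  field_simp
  ring

lemma explicitSolDeriv2_eq (hl : 0 < l) (hA : 2 < A) (hA2 : A ^ 2 = 2 * l ^ 2 + 4)
    (hr : -l < r) :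
    explicitSolDeriv2 l A r = -exp (explicitSol l A r) - (l + r)⁻¹ * explicitSolDeriv l A r := by
  have hs : 0 < r + l := by linarith
  have hD := explicitDenom_pos hl hA hr
  have hP := rpow_pos_of_pos hs A
  have hQ := rpow_pos_of_pos hl A
  have h1 : (r + l) ^ (A - 1) = (r + l) ^ A / (r + l) := by rw [rpow_sub hs, rpow_one]
  have h2 : (r + l) ^ (A - 2) = (r + l) ^ A / (r + l) ^ 2 := by
    rw [rpow_sub hs, rpow_two]
  have h3 : (r + l) ^ (2 * A - 2) = ((r + l) ^ A) ^ 2 / (r + l) ^ 2 := by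
    rw [show 2 * A - 2 = A + (A - 2) by ring, rpow_add hs, h2]
    ring
  have h4 : l ^ (A + 2) = l ^ A * l ^ 2 := by rw [rpow_add hl, rpow_two]
  rw [exp_explicitSol hl hA hr]
  unfold explicitSolDeriv2 explicitSolDeriv
  rw [h1, h2, h3, h4, show l + r = r + l by ring]
  unfold explicitDenom at *
  field_simp
  linear_combination (-2 * A ^ 2 * (r + l) ^ A * l ^ A) * hA2

lemma hasDerivAt_explicitSol_prod (hl : 0 < l) (hA : 2 < A) (hA2 : A ^ 2 = 2 * l ^ 2 + 4)
    (hr : -l < r) :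
    HasDerivAt (fun t => (explicitSol l A t, explicitSolDeriv l A t))
      (radialField exp l r (explicitSol l A r, explicitSolDeriv l A r)) r := by
  rw [radialField, ← explicitSolDeriv2_eq hl hA hA2 hr]
  exact (hasDerivAt_explicitSol hl hA hr).prodMk (hasDerivAt_explicitSolDeriv hl hA hr)

end ExplicitSolution

lemma hasDerivAt_prod_deriv_of_contDiffOn {z : ℝ → ℝ} {U : Set ℝ} (hU : IsOpen U)
    (hz : ContDiffOn ℝ 2 z U) {x : ℝ} (hx : x ∈ U) :
    HasDerivAt (fun t => (z t, deriv z t)) (deriv z x, deriv (deriv z) x) x := by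
  have hz' : ContDiffOn ℝ 1 (deriv z) U := hz.deriv_of_isOpen hU (by norm_num)
  exact ((hz.contDiffAt (hU.mem_nhds hx)).differentiableAt (by norm_num)).hasDerivAt.prodMk
    ((hz'.contDiffAt (hU.mem_nhds hx)).differentiableAt one_ne_zero).hasDerivAt

theorem stmt_6_general (l : ℝ) (hl : 0 < l) (z : ℝ → ℝ)
    (hz : ContDiffOn ℝ 2 z (Set.Ioi (-l)))
    (heq : ∀ r ∈ Set.Ioi (-l),
      -(deriv (deriv z) r) - deriv z r / (l + r) = Real.exp (z r))
    (h0 : z 0 = 0) (h0' : deriv z 0 = 0) :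
    ∀ r ∈ Set.Ioi (-l),
      z r = Real.log (4 * (Real.sqrt (2 * l ^ 2 + 4)) ^ 2 *
        l ^ (Real.sqrt (2 * l ^ 2 + 4) + 2) *
        (r + l) ^ (Real.sqrt (2 * l ^ 2 + 4) - 2) /
        ((Real.sqrt (2 * l ^ 2 + 4) + 2) * l ^ (Real.sqrt (2 * l ^ 2 + 4)) +
          (Real.sqrt (2 * l ^ 2 + 4) - 2) *
            (r + l) ^ (Real.sqrt (2 * l ^ 2 + 4))) ^ 2) := by
  intro r hr
  set A := √(2 * l ^ 2 + 4)
  have hA2 : A ^ 2 = 2 * l ^ 2 + 4 := sq_sqrt (by positivity)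
  have hA : 2 < A := by nlinarith [sqrt_nonneg (2 * l ^ 2 + 4)]
  have hzField : ∀ t ∈ Ioi (-l),
      HasDerivAt (fun t => (z t, deriv z t)) (radialField exp l t (z t, deriv z t)) t := by
    intro t ht
    have hfield : radialField exp l t (z t, deriv z t) = (deriv z t, deriv (deriv z) t) := by
      have := heq t ht
      rw [div_eq_inv_mul] at this
      simp only [radialField, Prod.mk.injEq, true_and]
      linarith
    rw [hfield]
    exact hasDerivAt_prod_deriv_of_contDiffOn isOpen_Ioi hz ht
  have hLip : ∀ a b R, -l < a →
      ∃ K, ∀ t ∈ Icc a b, LipschitzOnWith K (radialField exp l t) (closedBall 0 R) := by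
    intro a b R ha
    obtain ⟨K, hK⟩ := radialField_lipschitzOnWith contDiff_exp.locallyLipschitz ha R
    exact ⟨K, fun t ht => hK t ht.1⟩
  have hagree := eqOn_Ioi_of_hasDerivAt_of_lipschitzOnWith hLip (neg_neg_of_pos hl) hzField
    (fun t ht => hasDerivAt_explicitSol_prod hl hA hA2 ht)
    (Prod.ext (h0.trans (explicitSol_zero hl hA).symm)
      (h0'.trans (explicitSolDeriv_zero hl hA).symm))
  exact congrArg Prod.fst (hagree hr)

theorem stmt_6 (l : ℝ) (hl : 0 < l) (z : ℝ → ℝ)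
    (hz : ContDiffOn ℝ 2 z (Set.Ioi (-l)))
    (heq : ∀ r ∈ Set.Ioi (-l),
      -(deriv (deriv z) r) - deriv z r / (l + r) = Real.exp (z r))
    (hneg : ∀ r ∈ Set.Ioi (-l), z r ≤ 0)
    (h0 : z 0 = 0) (h0' : deriv z 0 = 0) :
    ∀ r ∈ Set.Ioi (-l),
      z r = Real.log (4 * (Real.sqrt (2 * l ^ 2 + 4)) ^ 2 *
        l ^ (Real.sqrt (2 * l ^ 2 + 4) + 2) *
        (r + l) ^ (Real.sqrt (2 * l ^ 2 + 4) - 2) /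
        ((Real.sqrt (2 * l ^ 2 + 4) + 2) * l ^ (Real.sqrt (2 * l ^ 2 + 4)) +
          (Real.sqrt (2 * l ^ 2 + 4) - 2) *
            (r + l) ^ (Real.sqrt (2 * l ^ 2 + 4))) ^ 2) :=
  stmt_6_general l hl z hz heq h0 h0'
end

section
/- Every C² function z : (0,∞) → ℝ, continuously extendable to [0,∞), that satisfies -z'' - z'/r = e^z on (0,∞) with z ≤ 0, z(0) = 0 and z'(0+) = 0 equals z(r) = log(64/(8+r²)²). -/
/-!
Both `z` and the bubble `log (64 / (8 + r²)²)` solve the initial value problem, and integrating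
`(r z')' = -r e^z` twice gives a solution in the form `z r = -∫₀ʳ (1/t) ∫₀ᵗ s e^{z s} ds dt`.
Both are nonpositive, where `exp` is 1-Lipschitz, so a bound `|z₁ - z₂| ≤ c s^k` on `(0, R]`
improves to `c s^(k+2) / (k+2)²`. Iterating from the crude bound `R² / 2` gives
`|z₁ s - z₂ s| ≤ R² / 2 · (s^n / (2^n n!))²` for every `n`, hence `z₁ = z₂`.
-/

open Filter Set MeasureTheory Topology

lemma exp_sub_exp_le_sub_of_le_of_nonpos {a b : ℝ} (hba : b ≤ a) (ha : a ≤ 0) :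
    Real.exp a - Real.exp b ≤ a - b := by
  have hexp : 1 - Real.exp (b - a) ≤ a - b := by linarith [Real.add_one_le_exp (b - a)]
  calc Real.exp a - Real.exp b = Real.exp a * (1 - Real.exp (b - a)) := by
        rw [mul_sub, ← Real.exp_add]; ring_nf
    _ ≤ 1 * (a - b) := by
        gcongr
        · exact sub_nonneg.2 (Real.exp_le_one_iff.2 (by linarith))
        · exact Real.exp_le_one_iff.2 ha
    _ = a - b := one_mul _

lemma abs_exp_sub_exp_le_of_nonpos {a b : ℝ} (ha : a ≤ 0) (hb : b ≤ 0) :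
    |Real.exp a - Real.exp b| ≤ |a - b| := by
  rcases le_total b a with h | h
  · rw [abs_of_nonneg (sub_nonneg.2 (Real.exp_le_exp.2 h)), abs_of_nonneg (sub_nonneg.2 h)]
    exact exp_sub_exp_le_sub_of_le_of_nonpos h ha
  · rw [abs_sub_comm, abs_sub_comm a, abs_of_nonneg (sub_nonneg.2 (Real.exp_le_exp.2 h)),
      abs_of_nonneg (sub_nonneg.2 h)]
    exact exp_sub_exp_le_sub_of_le_of_nonpos h hb

lemma abs_intervalIntegral_le_mul_pow {f : ℝ → ℝ} {c r : ℝ} {k : ℕ} (hr : 0 ≤ r)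
    (hf : ∀ t ∈ Ioc 0 r, |f t| ≤ c * t ^ k) :
    |∫ t in 0..r, f t| ≤ c * r ^ (k + 1) / (k + 1) := by
  calc |∫ t in 0..r, f t| ≤ ∫ t in 0..r, c * t ^ k :=
        intervalIntegral.norm_integral_le_of_norm_le (f := f) (g := fun t => c * t ^ k) hr
          (ae_of_all _ hf) (by apply Continuous.intervalIntegrable; fun_prop)
    _ = c * r ^ (k + 1) / (k + 1) := by
        rw [intervalIntegral.integral_const_mul, integral_pow]; ring

lemma eq_zero_of_abs_le_mul_pow_improving {w : ℝ → ℝ} {R M : ℝ}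
    (hM : ∀ s ∈ Ioc 0 R, |w s| ≤ M)
    (himprove : ∀ (c : ℝ) (k : ℕ), (∀ s ∈ Ioc 0 R, |w s| ≤ c * s ^ k) →
      ∀ s ∈ Ioc 0 R, |w s| ≤ c / (k + 2) ^ 2 * s ^ (k + 2)) :
    ∀ s ∈ Ioc 0 R, w s = 0 := by
  -- `∏_{j=1}^n (2j)² = (2^n n!)²`
  have hbound : ∀ n : ℕ, ∀ s ∈ Ioc 0 R, |w s| ≤ M * (s ^ n / (2 ^ n * n.factorial)) ^ 2 := by
    intro n
    induction n with
    | zero => simpa using hM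
    | succ n ih =>
      have hpow : ∀ s ∈ Ioc 0 R, |w s| ≤ M / (2 ^ n * n.factorial) ^ 2 * s ^ (2 * n) :=
        fun s hs => (ih s hs).trans_eq (by ring)
      intro s hs
      refine (himprove _ _ hpow s hs).trans_eq ?_
      rw [Nat.factorial_succ]
      push_cast
      field_simp
      ring
  intro s hs
  have hlim : Tendsto (fun n : ℕ => M * (s ^ n / (2 ^ n * n.factorial)) ^ 2) atTop (𝓝 0) := by
    simp_rw [← div_div, ← div_pow]
    simpa using ((FloorSemiring.tendsto_pow_div_factorial_atTop (s / 2)).pow 2).const_mul M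
  exact abs_nonpos_iff.1 (ge_of_tendsto' hlim fun n => hbound n s hs)

structure IsRadialLiouvilleSolution (z : ℝ → ℝ) : Prop where
  contDiffOn : ContDiffOn ℝ 2 z (Ioi 0)
  continuousWithinAt_zero : ContinuousWithinAt z (Ici 0) 0
  ode : ∀ r ∈ Ioi (0 : ℝ), -deriv (deriv z) r - deriv z r / r = Real.exp (z r)
  apply_zero : z 0 = 0
  tendsto_deriv_zero : Tendsto (deriv z) (𝓝[>] 0) (𝓝 0)

namespace IsRadialLiouvilleSolution

variable {z : ℝ → ℝ} {r : ℝ}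

lemma continuousOn_Ici (hz : IsRadialLiouvilleSolution z) : ContinuousOn z (Ici 0) := by
  intro x hx
  rcases (mem_Ici.1 hx).eq_or_lt with rfl | hx
  · exact hz.continuousWithinAt_zero
  · exact ((hz.contDiffOn.continuousOn x hx).continuousAt (Ioi_mem_nhds hx)).continuousWithinAt

lemma hasDerivAt (hz : IsRadialLiouvilleSolution z) (hr : 0 < r) :
    HasDerivAt z (deriv z r) r :=
  ((hz.contDiffOn.differentiableOn (by norm_num) r hr).differentiableAt
    (Ioi_mem_nhds hr)).hasDerivAt

lemma contDiffOn_deriv (hz : IsRadialLiouvilleSolution z) : ContDiffOn ℝ 1 (deriv z) (Ioi 0) :=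
  hz.contDiffOn.deriv_of_isOpen isOpen_Ioi (by norm_num)

lemma hasDerivAt_deriv (hz : IsRadialLiouvilleSolution z) (hr : 0 < r) :
    HasDerivAt (deriv z) (deriv (deriv z) r) r :=
  ((hz.contDiffOn_deriv.differentiableOn (by norm_num) r hr).differentiableAt
    (Ioi_mem_nhds hr)).hasDerivAt

lemma intervalIntegrable_mul_exp (hz : IsRadialLiouvilleSolution z) (hr : 0 ≤ r) :
    IntervalIntegrable (fun s => s * Real.exp (z s)) volume 0 r := by
  apply ContinuousOn.intervalIntegrable
  rw [uIcc_of_le hr]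
  exact continuousOn_id.mul (Real.continuous_exp.comp_continuousOn
    (hz.continuousOn_Ici.mono Icc_subset_Ici_self))

-- The ODE says `(r z')' = -r e^z`, and `r z'` tends to `0` at `0`.
lemma mul_deriv_eq_neg_integral (hz : IsRadialLiouvilleSolution z) (hr : 0 < r) :
    r * deriv z r = -∫ s in 0..r, s * Real.exp (z s) := by
  have hderiv : ∀ t ∈ Ioo 0 r,
      HasDerivAt (fun t => t * deriv z t) (-(t * Real.exp (z t))) t := by
    intro t ht
    refine ((hasDerivAt_id' t).mul (hz.hasDerivAt_deriv ht.1)).congr_deriv ?_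
    have := hz.ode t ht.1
    field_simp [ht.1.ne'] at this ⊢
    linarith
  have hzero : Tendsto (fun t => t * deriv z t) (𝓝[>] 0) (𝓝 0) := by
    simpa using (tendsto_nhdsWithin_of_tendsto_nhds tendsto_id).mul hz.tendsto_deriv_zero
  have hr' : Tendsto (fun t => t * deriv z t) (𝓝[<] r) (𝓝 (r * deriv z r)) :=
    (continuousAt_id.mul (hz.contDiffOn_deriv.continuousOn.continuousAt
      (Ioi_mem_nhds hr))).tendsto.mono_left nhdsWithin_le_nhds
  have := intervalIntegral.integral_eq_sub_of_hasDerivAt_of_tendsto hr hderiv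
    (hz.intervalIntegrable_mul_exp hr.le).neg hzero hr'
  rw [intervalIntegral.integral_neg] at this
  linarith

lemma abs_deriv_le (hz : IsRadialLiouvilleSolution z) (hneg : ∀ r ∈ Ioi (0 : ℝ), z r ≤ 0)
    (hr : 0 < r) : |deriv z r| ≤ r / 2 := by
  have hint : |∫ s in 0..r, s * Real.exp (z s)| ≤ r ^ 2 / 2 := by
    convert abs_intervalIntegral_le_mul_pow (c := 1) (k := 1) hr.le fun s hs => ?_ using 1
    · norm_num
    rw [abs_mul, abs_of_pos hs.1, Real.abs_exp, pow_one, one_mul]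
    exact mul_le_of_le_one_right hs.1.le (Real.exp_le_one_iff.2 (hneg s hs.1))
  rw [← mul_le_mul_iff_right₀ hr]
  calc r * |deriv z r| = |r * deriv z r| := by rw [abs_mul, abs_of_pos hr]
    _ = |∫ s in 0..r, s * Real.exp (z s)| := by rw [hz.mul_deriv_eq_neg_integral hr, abs_neg]
    _ ≤ r ^ 2 / 2 := hint
    _ = r * (r / 2) := by ring

lemma intervalIntegrable_deriv (hz : IsRadialLiouvilleSolution z)
    (hneg : ∀ r ∈ Ioi (0 : ℝ), z r ≤ 0) (hr : 0 ≤ r) :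
    IntervalIntegrable (deriv z) volume 0 r := by
  refine IntervalIntegrable.mono_fun' (g := fun _ => r / 2) intervalIntegrable_const
    (measurable_deriv z).aestronglyMeasurable ?_
  rw [uIoc_of_le hr, EventuallyLE, ae_restrict_iff' measurableSet_Ioc]
  exact ae_of_all _ fun t ht => (hz.abs_deriv_le hneg ht.1).trans (by linarith [ht.2])

lemma integral_deriv (hz : IsRadialLiouvilleSolution z)
    (hneg : ∀ r ∈ Ioi (0 : ℝ), z r ≤ 0) (hr : 0 < r) :
    ∫ t in 0..r, deriv z t = z r := by
  rw [intervalIntegral.integral_eq_sub_of_hasDerivAt_of_le hr.le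
    (hz.continuousOn_Ici.mono Icc_subset_Ici_self) (fun t ht => hz.hasDerivAt ht.1)
    (hz.intervalIntegrable_deriv hneg hr.le), hz.apply_zero, sub_zero]

lemma abs_le (hz : IsRadialLiouvilleSolution z) (hneg : ∀ r ∈ Ioi (0 : ℝ), z r ≤ 0)
    (hr : 0 < r) : |z r| ≤ r ^ 2 / 4 := by
  rw [← hz.integral_deriv hneg hr]
  convert abs_intervalIntegral_le_mul_pow (c := 1 / 2) (k := 1) hr.le
    (fun t ht => (hz.abs_deriv_le hneg ht.1).trans_eq (by ring)) using 1
  norm_num; ring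

variable {z₁ z₂ : ℝ → ℝ}

lemma abs_deriv_sub_deriv_le (hz₁ : IsRadialLiouvilleSolution z₁)
    (hz₂ : IsRadialLiouvilleSolution z₂) (hneg₁ : ∀ r ∈ Ioi (0 : ℝ), z₁ r ≤ 0)
    (hneg₂ : ∀ r ∈ Ioi (0 : ℝ), z₂ r ≤ 0) {R c : ℝ} {k : ℕ}
    (hbound : ∀ s ∈ Ioc 0 R, |z₁ s - z₂ s| ≤ c * s ^ k) (hr : r ∈ Ioc 0 R) :
    |deriv z₁ r - deriv z₂ r| ≤ c / (k + 2) * r ^ (k + 1) := by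
  have hexp : ∀ s ∈ Ioc 0 r,
      |s * (Real.exp (z₁ s) - Real.exp (z₂ s))| ≤ c * s ^ (k + 1) := by
    intro s hs
    rw [abs_mul, abs_of_pos hs.1]
    calc s * |Real.exp (z₁ s) - Real.exp (z₂ s)| ≤ s * (c * s ^ k) :=
          mul_le_mul_of_nonneg_left ((abs_exp_sub_exp_le_of_nonpos (hneg₁ s hs.1)
            (hneg₂ s hs.1)).trans (hbound s ⟨hs.1, hs.2.trans hr.2⟩)) hs.1.le
      _ = c * s ^ (k + 1) := by ring
  have hmul : r * (deriv z₁ r - deriv z₂ r) =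
      -∫ s in 0..r, s * (Real.exp (z₁ s) - Real.exp (z₂ s)) := by
    simp_rw [mul_sub]
    rw [intervalIntegral.integral_sub (hz₁.intervalIntegrable_mul_exp hr.1.le)
      (hz₂.intervalIntegrable_mul_exp hr.1.le), hz₁.mul_deriv_eq_neg_integral hr.1,
      hz₂.mul_deriv_eq_neg_integral hr.1]
    ring
  have hint := abs_intervalIntegral_le_mul_pow hr.1.le hexp
  rw [← abs_neg, ← hmul, abs_mul, abs_of_pos hr.1] at hint
  rw [← mul_le_mul_iff_right₀ hr.1]
  push_cast at hint
  calc r * |deriv z₁ r - deriv z₂ r| ≤ c * r ^ (k + 1 + 1) / (k + 1 + 1) := hint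
    _ = r * (c / (k + 2) * r ^ (k + 1)) := by ring

lemma abs_sub_le_of_abs_sub_le (hz₁ : IsRadialLiouvilleSolution z₁)
    (hz₂ : IsRadialLiouvilleSolution z₂) (hneg₁ : ∀ r ∈ Ioi (0 : ℝ), z₁ r ≤ 0)
    (hneg₂ : ∀ r ∈ Ioi (0 : ℝ), z₂ r ≤ 0) {R c : ℝ} {k : ℕ}
    (hbound : ∀ s ∈ Ioc 0 R, |z₁ s - z₂ s| ≤ c * s ^ k) (hr : r ∈ Ioc 0 R) :
    |z₁ r - z₂ r| ≤ c / (k + 2) ^ 2 * r ^ (k + 2) := by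
  rw [← hz₁.integral_deriv hneg₁ hr.1, ← hz₂.integral_deriv hneg₂ hr.1,
    ← intervalIntegral.integral_sub (hz₁.intervalIntegrable_deriv hneg₁ hr.1.le)
      (hz₂.intervalIntegrable_deriv hneg₂ hr.1.le)]
  have := abs_intervalIntegral_le_mul_pow hr.1.le fun t ht =>
    abs_deriv_sub_deriv_le hz₁ hz₂ hneg₁ hneg₂ hbound ⟨ht.1, ht.2.trans hr.2⟩
  refine this.trans_eq ?_
  push_cast
  field_simp
  ring

theorem eqOn (hz₁ : IsRadialLiouvilleSolution z₁) (hz₂ : IsRadialLiouvilleSolution z₂)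
    (hneg₁ : ∀ r ∈ Ioi (0 : ℝ), z₁ r ≤ 0) (hneg₂ : ∀ r ∈ Ioi (0 : ℝ), z₂ r ≤ 0) :
    EqOn z₁ z₂ (Ioi 0) := by
  intro R hR
  have hM : ∀ s ∈ Ioc 0 R, |z₁ s - z₂ s| ≤ R ^ 2 / 2 := by
    intro s hs
    have hsR : s ^ 2 ≤ R ^ 2 := pow_le_pow_left₀ hs.1.le hs.2 2
    linarith [abs_sub _ _ |>.trans (add_le_add (hz₁.abs_le hneg₁ hs.1) (hz₂.abs_le hneg₂ hs.1))]
  have := eq_zero_of_abs_le_mul_pow_improving hM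
    (fun c k hbound s hs => abs_sub_le_of_abs_sub_le hz₁ hz₂ hneg₁ hneg₂ hbound hs) R
    ⟨hR, le_rfl⟩
  exact sub_eq_zero.1 this

end IsRadialLiouvilleSolution

noncomputable def liouvilleBubble (r : ℝ) : ℝ := Real.log (64 / (8 + r ^ 2) ^ 2)

lemma liouvilleBubble_eq_log_sub :
    liouvilleBubble = fun r => Real.log 64 - 2 * Real.log (8 + r ^ 2) := by
  ext r
  rw [liouvilleBubble, Real.log_div (by norm_num) (by positivity), Real.log_pow]
  push_cast; ring

lemma exp_liouvilleBubble (r : ℝ) : Real.exp (liouvilleBubble r) = 64 / (8 + r ^ 2) ^ 2 :=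
  Real.exp_log (by positivity)

lemma liouvilleBubble_nonpos (r : ℝ) : liouvilleBubble r ≤ 0 := by
  refine Real.log_nonpos (by positivity) ((div_le_one (by positivity)).2 ?_)
  nlinarith [sq_nonneg r]

lemma contDiff_liouvilleBubble : ContDiff ℝ 2 liouvilleBubble := by
  rw [liouvilleBubble_eq_log_sub]
  exact contDiff_const.sub (contDiff_const.mul
    ((by fun_prop : ContDiff ℝ 2 fun r : ℝ => 8 + r ^ 2).log fun r => by positivity))

lemma hasDerivAt_liouvilleBubble (r : ℝ) :
    HasDerivAt liouvilleBubble (-(4 * r) / (8 + r ^ 2)) r := by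
  have h : HasDerivAt (fun r : ℝ => 8 + r ^ 2) (2 * r) r := by
    simpa using (hasDerivAt_pow 2 r).const_add 8
  rw [liouvilleBubble_eq_log_sub]
  refine (((h.log (by positivity)).const_mul 2).const_sub (Real.log 64)).congr_deriv ?_
  ring

lemma deriv_liouvilleBubble : deriv liouvilleBubble = fun r => -(4 * r) / (8 + r ^ 2) :=
  funext fun r => (hasDerivAt_liouvilleBubble r).deriv

lemma hasDerivAt_deriv_liouvilleBubble (r : ℝ) :
    HasDerivAt (deriv liouvilleBubble) (-(4 * (8 - r ^ 2)) / (8 + r ^ 2) ^ 2) r := by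
  have h : HasDerivAt (fun r : ℝ => 8 + r ^ 2) (2 * r) r := by
    simpa using (hasDerivAt_pow 2 r).const_add 8
  rw [deriv_liouvilleBubble]
  refine (((hasDerivAt_id' r).const_mul 4).fun_neg.div h (by positivity)).congr_deriv ?_
  ring

theorem isRadialLiouvilleSolution_liouvilleBubble :
    IsRadialLiouvilleSolution liouvilleBubble where
  contDiffOn := contDiff_liouvilleBubble.contDiffOn
  continuousWithinAt_zero := contDiff_liouvilleBubble.continuous.continuousWithinAt
  ode r hr := by
    rw [(hasDerivAt_deriv_liouvilleBubble r).deriv, deriv_liouvilleBubble, exp_liouvilleBubble]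
    field_simp [(mem_Ioi.1 hr).ne']
    ring
  apply_zero := by norm_num [liouvilleBubble]
  tendsto_deriv_zero := by
    have h := ((contDiff_liouvilleBubble.continuous_deriv one_le_two).tendsto 0).mono_left
      (nhdsWithin_le_nhds (s := Ioi 0))
    rw [deriv_liouvilleBubble] at h ⊢
    simpa using h

theorem stmt_7 (z : ℝ → ℝ)
    (hz : ContDiffOn ℝ 2 z (Set.Ioi (0 : ℝ)))
    (hcont : ContinuousWithinAt z (Set.Ici (0 : ℝ)) 0)
    (heq : ∀ r ∈ Set.Ioi (0 : ℝ),
      -(deriv (deriv z) r) - deriv z r / r = Real.exp (z r))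
    (hneg : ∀ r ∈ Set.Ioi (0 : ℝ), z r ≤ 0)
    (h0 : z 0 = 0)
    (h0' : Tendsto (deriv z) (nhdsWithin 0 (Set.Ioi (0 : ℝ))) (nhds 0)) :
    ∀ r ∈ Set.Ioi (0 : ℝ), z r = Real.log (64 / (8 + r ^ 2) ^ 2) :=
  IsRadialLiouvilleSolution.eqOn ⟨hz, hcont, heq, h0, h0'⟩
    isRadialLiouvilleSolution_liouvilleBubble hneg fun r _ => liouvilleBubble_nonpos r
end

section
/- Every solution φ of the linear inhomogeneous ODE -φ'' - φ'/r = e^{z}(φ + (αβ/2) z) on (0,∞) with z(r) = log(64/(8+r²)²), continuously extendable to [0,∞) with φ(0) = 0, is given by φ(r) = αβ ( log(8+r²) + 8/(8+r²) − 1 − log 8 ). -/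
/-!
`z = log bubble` is the standard bubble of Liouville's equation `-Δz = e^z` on `ℝ²`, and the
operator `-Δ - e^z` acting on `φ` is its linearization, restricted to radial functions.
The homogeneous equation has the explicit solutions `regularSol = (8 - r²)/(8 + r²)` (half the
derivative of the bubble along the scaling `z(r) ↦ z(λr) + 2 log λ`) and `singularSol`, obtained by
reduction of order, which behaves like `log r` at `0`; their Wronskian at `r = 1` is `1`.
By uniqueness for linear ODEs on `(0, ∞)`,
`φ = αβ · particularSol + a · regularSol + b · singularSol`.
Continuity of `φ` at `0` with `φ(0) = 0` forces `b = 0`, then `a = 0`.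
-/

open Set Filter Topology Real

theorem eqOn_zero_of_linear_ode {E : Type*} [NormedAddCommGroup E] [NormedSpace ℝ E]
    {A : ℝ → E →L[ℝ] E} {f : ℝ → E} {a b t₀ : ℝ} (hA : ContinuousOn A (Ioo a b))
    (hf : ∀ t ∈ Ioo a b, HasDerivAt f (A t (f t)) t) (ht₀ : t₀ ∈ Ioo a b) (hf₀ : f t₀ = 0) :
    EqOn f 0 (Ioo a b) := by
  intro t ht
  have hlo : a < min t t₀ := lt_min ht.1 ht₀.1
  have hhi : max t t₀ < b := max_lt ht.2 ht₀.2
  have hsub : Icc ((a + min t t₀) / 2) ((b + max t t₀) / 2) ⊆ Ioo a b :=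
    fun s hs => ⟨by linarith [hs.1], by linarith [hs.2]⟩
  have hmem : ∀ s ∈ ({t, t₀} : Set ℝ), s ∈ Ioo ((a + min t t₀) / 2) ((b + max t t₀) / 2) := by
    rintro s (rfl | rfl)
    · constructor <;> linarith [min_le_left s t₀, le_max_left s t₀]
    · constructor <;> linarith [min_le_right t s, le_max_right t s]
  obtain ⟨C, hC⟩ := isCompact_Icc.exists_bound_of_continuousOn (hA.mono hsub)
  refine ODE_solution_unique_of_mem_Ioo (K := C.toNNReal) (v := fun t x => A t x)
    (s := fun _ => univ) (fun s hs => ?_) (hmem t₀ (by simp))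
    (fun s hs => ⟨hf s (hsub (Ioo_subset_Icc_self hs)), trivial⟩)
    (fun s _ => ⟨by simp, trivial⟩) hf₀ (hmem t (by simp))
  refine ((A s).lipschitz.weaken ?_).lipschitzOnWith
  rw [← NNReal.coe_le_coe, coe_nnnorm]
  exact (hC s (Ioo_subset_Icc_self hs)).trans (Real.le_coe_toNNReal C)

theorem eqOn_zero_of_linear_ode_two {p q y y' : ℝ → ℝ} {a b t₀ : ℝ}
    (hp : ContinuousOn p (Ioo a b)) (hq : ContinuousOn q (Ioo a b))
    (hy : ∀ t ∈ Ioo a b, HasDerivAt y (y' t) t)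
    (hy' : ∀ t ∈ Ioo a b, HasDerivAt y' (p t * y' t + q t * y t) t)
    (ht₀ : t₀ ∈ Ioo a b) (hy₀ : y t₀ = 0) (hy₀' : y' t₀ = 0) :
    EqOn y 0 (Ioo a b) := by
  let A : ℝ → ℝ × ℝ →L[ℝ] ℝ × ℝ := fun t =>
    (ContinuousLinearMap.snd ℝ ℝ ℝ).prod
      (p t • ContinuousLinearMap.snd ℝ ℝ ℝ + q t • ContinuousLinearMap.fst ℝ ℝ ℝ)
  have hA : ContinuousOn A (Ioo a b) :=
    (ContinuousLinearMap.prodₗᵢ ℝ).continuous.comp_continuousOn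
      (continuousOn_const.prodMk ((hp.smul continuousOn_const).add (hq.smul continuousOn_const)))
  have h := eqOn_zero_of_linear_ode (f := fun t => (y t, y' t)) hA
    (fun t ht => by simpa [A] using (hy t ht).prodMk (hy' t ht)) ht₀ (by simp [hy₀, hy₀'])
  exact fun t ht => congrArg Prod.fst (h ht)

-- `y'` plays the role of the derivative of `y`: the radial form of `Δy + w y = g` on `(0, ∞)`.
def IsRadialSolution (w g y y' : ℝ → ℝ) : Prop :=
  ∀ r > 0, HasDerivAt y (y' r) r ∧ HasDerivAt y' (g r - y' r / r - w r * y r) r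

section RadialEquation

variable {w g g₁ g₂ y y' y₁ y₁' y₂ y₂' : ℝ → ℝ}

theorem IsRadialSolution.of_contDiffOn (hy : ContDiffOn ℝ 2 y (Ioi 0))
    (h : ∀ r > 0, deriv (deriv y) r = g r - deriv y r / r - w r * y r) :
    IsRadialSolution w g y (deriv y) := by
  have hy' : ContDiffOn ℝ 1 (deriv y) (Ioi 0) := hy.deriv_of_isOpen isOpen_Ioi (by norm_num)
  intro r hr
  have hnhds : Ioi (0 : ℝ) ∈ 𝓝 r := isOpen_Ioi.mem_nhds hr
  refine ⟨((hy.differentiableOn two_ne_zero).differentiableAt hnhds).hasDerivAt, ?_⟩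
  rw [← h r hr]
  exact ((hy'.differentiableOn one_ne_zero).differentiableAt hnhds).hasDerivAt

theorem IsRadialSolution.add (h₁ : IsRadialSolution w g₁ y₁ y₁')
    (h₂ : IsRadialSolution w g₂ y₂ y₂') :
    IsRadialSolution w (g₁ + g₂) (y₁ + y₂) (y₁' + y₂') := fun r hr =>
  ⟨(h₁ r hr).1.add (h₂ r hr).1,
    ((h₁ r hr).2.add (h₂ r hr).2).congr_deriv (by simp only [Pi.add_apply]; ring)⟩

theorem IsRadialSolution.sub (h₁ : IsRadialSolution w g₁ y₁ y₁')
    (h₂ : IsRadialSolution w g₂ y₂ y₂') :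
    IsRadialSolution w (g₁ - g₂) (y₁ - y₂) (y₁' - y₂') := fun r hr =>
  ⟨(h₁ r hr).1.sub (h₂ r hr).1,
    ((h₁ r hr).2.sub (h₂ r hr).2).congr_deriv (by simp only [Pi.sub_apply]; ring)⟩

theorem IsRadialSolution.const_smul (h : IsRadialSolution w g y y') (c : ℝ) :
    IsRadialSolution w (c • g) (c • y) (c • y') := fun r hr =>
  ⟨(h r hr).1.const_smul c,
    ((h r hr).2.const_smul c).congr_deriv (by simp only [Pi.smul_apply, smul_eq_mul]; ring)⟩

theorem IsRadialSolution.eqOn {t₀ : ℝ} (hw : ContinuousOn w (Ioi 0))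
    (h₁ : IsRadialSolution w g y₁ y₁') (h₂ : IsRadialSolution w g y₂ y₂') (ht₀ : 0 < t₀)
    (hy : y₁ t₀ = y₂ t₀) (hy' : y₁' t₀ = y₂' t₀) :
    EqOn y₁ y₂ (Ioi 0) := by
  intro r hr
  have h := h₁.sub h₂
  have hzero := eqOn_zero_of_linear_ode_two (a := 0) (b := max r t₀ + 1)
    (p := fun t => -t⁻¹) (q := fun t => -w t)
    (continuousOn_inv₀.neg.mono fun t ht => ht.1.ne') (hw.mono Ioo_subset_Ioi_self).neg
    (fun t ht => (h t ht.1).1)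
    (fun t ht => (h t ht.1).2.congr_deriv (by simp only [Pi.sub_apply]; ring))
    ⟨ht₀, by linarith [le_max_right r t₀]⟩ (sub_eq_zero.2 hy) (sub_eq_zero.2 hy')
    ⟨hr, by linarith [le_max_left r t₀]⟩
  exact sub_eq_zero.1 hzero

end RadialEquation

noncomputable def bubble (r : ℝ) : ℝ := 64 / (8 + r ^ 2) ^ 2

-- `particularSol = (regularSol - 1 - log bubble) / 2`: the operator `y'' + y'/r + bubble * y` sends
-- `log bubble` to `bubble * (log bubble - 1)` (Liouville's equation), `1` to `bubble`, and kills
-- `regularSol`.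
noncomputable def particularSol (r : ℝ) : ℝ := log (8 + r ^ 2) + 8 / (8 + r ^ 2) - 1 - log 8
noncomputable def particularSol' (r : ℝ) : ℝ := 2 * r ^ 3 / (8 + r ^ 2) ^ 2

noncomputable def regularSol (r : ℝ) : ℝ := (8 - r ^ 2) / (8 + r ^ 2)
noncomputable def regularSol' (r : ℝ) : ℝ := -32 * r / (8 + r ^ 2) ^ 2

noncomputable def singularSol (r : ℝ) : ℝ := regularSol r * log r + 16 / (8 + r ^ 2)
noncomputable def singularSol' (r : ℝ) : ℝ :=
  regularSol' r * log r + regularSol r / r - 32 * r / (8 + r ^ 2) ^ 2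

theorem log_bubble (r : ℝ) : log (bubble r) = 2 * log 8 - 2 * log (8 + r ^ 2) := by
  rw [bubble, log_div (by norm_num) (by positivity), log_pow,
    show (64 : ℝ) = 8 ^ 2 by norm_num, log_pow]
  push_cast
  ring

theorem hasDerivAt_eight_add_sq (r : ℝ) : HasDerivAt (fun r : ℝ => 8 + r ^ 2) (2 * r) r := by
  simpa using (hasDerivAt_pow 2 r).const_add 8

theorem isRadialSolution_particularSol :
    IsRadialSolution bubble (fun r => -(bubble r * log (bubble r)) / 2)
      particularSol particularSol' := by
  intro r hr
  have h8 : (8 + r ^ 2) ≠ 0 := by positivity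
  have hsq := hasDerivAt_eight_add_sq r
  constructor
  · refine ((((hsq.log h8).fun_add ((hasDerivAt_const r 8).fun_div hsq h8)).sub_const 1).sub_const
      (log 8)).congr_deriv ?_
    rw [particularSol']
    field_simp
    ring
  · refine (((hasDerivAt_pow 3 r).const_mul 2).fun_div (hsq.fun_pow 2)
      (pow_ne_zero 2 h8)).congr_deriv ?_
    dsimp only
    rw [log_bubble, bubble, particularSol, particularSol']
    field_simp
    ring

theorem isRadialSolution_regularSol : IsRadialSolution bubble 0 regularSol regularSol' := by
  intro r hr
  have h8 : (8 + r ^ 2) ≠ 0 := by positivity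
  have hsq := hasDerivAt_eight_add_sq r
  constructor
  · refine (((hasDerivAt_pow 2 r).const_sub 8).fun_div hsq h8).congr_deriv ?_
    rw [regularSol']
    field_simp
    ring
  · refine (((hasDerivAt_id' r).const_mul (-32)).fun_div (hsq.fun_pow 2)
      (pow_ne_zero 2 h8)).congr_deriv ?_
    rw [bubble, regularSol, regularSol', Pi.zero_apply]
    field_simp
    ring

theorem isRadialSolution_singularSol : IsRadialSolution bubble 0 singularSol singularSol' := by
  intro r hr
  have h8 : (8 + r ^ 2) ≠ 0 := by positivity
  have hsq := hasDerivAt_eight_add_sq r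
  obtain ⟨hu, hu'⟩ := isRadialSolution_regularSol r hr
  have hlog := hasDerivAt_log hr.ne'
  constructor
  · refine ((hu.fun_mul hlog).fun_add ((hasDerivAt_const r 16).fun_div hsq h8)).congr_deriv ?_
    rw [singularSol']
    field_simp
    ring
  · refine (((hu'.fun_mul hlog).fun_add (hu.fun_div (hasDerivAt_id' r) hr.ne')).fun_sub
      (((hasDerivAt_id' r).const_mul 32).fun_div (hsq.fun_pow 2)
        (pow_ne_zero 2 h8))).congr_deriv ?_
    rw [bubble, singularSol, singularSol', regularSol, regularSol', Pi.zero_apply]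
    field_simp
    ring

theorem continuous_bubble : Continuous bubble :=
  continuous_const.div (by fun_prop) fun r => by positivity

theorem continuous_particularSol : Continuous particularSol := by
  have hlog : Continuous fun r : ℝ => log (8 + r ^ 2) :=
    (by fun_prop : Continuous fun r : ℝ => 8 + r ^ 2).log fun r => by positivity
  have hdiv : Continuous fun r : ℝ => 8 / (8 + r ^ 2) :=
    continuous_const.div (by fun_prop) fun r => by positivity
  exact ((hlog.add hdiv).sub continuous_const).sub continuous_const

theorem particularSol_zero : particularSol 0 = 0 := by
  simp [particularSol]

theorem continuous_regularSol : Continuous regularSol :=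
  (by fun_prop : Continuous fun r : ℝ => 8 - r ^ 2).div (by fun_prop) fun r => by positivity

theorem regularSol_zero : regularSol 0 = 1 := by
  simp [regularSol]

theorem tendsto_singularSol_atBot : Tendsto singularSol (𝓝[>] 0) atBot := by
  have hu : Tendsto regularSol (𝓝[>] 0) (𝓝 1) :=
    (continuous_regularSol.tendsto' 0 1 regularSol_zero).mono_left nhdsWithin_le_nhds
  have hv : Continuous fun r : ℝ => 16 / (8 + r ^ 2) :=
    continuous_const.div (by fun_prop) fun r => by positivity
  exact (Tendsto.pos_mul_atBot one_pos hu tendsto_log_nhdsGT_zero).atBot_add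
    ((hv.tendsto 0).mono_left nhdsWithin_le_nhds)

theorem wronskian_regularSol_singularSol_one :
    regularSol 1 * singularSol' 1 - regularSol' 1 * singularSol 1 = 1 := by
  norm_num [regularSol, regularSol', singularSol, singularSol']

theorem exists_regularSol_singularSol_eq (P Q : ℝ) :
    ∃ a b : ℝ, a * regularSol 1 + b * singularSol 1 = P ∧
      a * regularSol' 1 + b * singularSol' 1 = Q :=
  ⟨singularSol' 1 * P - singularSol 1 * Q, regularSol 1 * Q - regularSol' 1 * P,
    by linear_combination P * wronskian_regularSol_singularSol_one,
    by linear_combination Q * wronskian_regularSol_singularSol_one⟩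

theorem eq_zero_of_tendsto_regularSol_singularSol {a b L : ℝ}
    (h : Tendsto (fun r => a * regularSol r + b * singularSol r) (𝓝[>] 0) (𝓝 L)) :
    b = 0 ∧ a = L := by
  have hreg : Tendsto (fun r => a * regularSol r) (𝓝[>] 0) (𝓝 a) := by
    simpa [regularSol_zero] using
      ((continuous_regularSol.tendsto 0).mono_left nhdsWithin_le_nhds).const_mul a
  have hb : b = 0 := by
    by_contra hb
    refine not_tendsto_nhds_of_tendsto_atBot tendsto_singularSol_atBot ((L - a) / b) ?_
    exact ((h.sub hreg).div_const b).congr fun r => by field_simp; ring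
  subst hb
  exact ⟨rfl, tendsto_nhds_unique hreg (by simpa using h)⟩

theorem stmt_8_general (α β : ℝ) (φ : ℝ → ℝ)
    (hφ : ContDiffOn ℝ 2 φ (Set.Ioi (0 : ℝ)))
    (hcont : ContinuousWithinAt φ (Set.Ici (0 : ℝ)) 0)
    (h0 : φ 0 = 0)
    (heq : ∀ r ∈ Set.Ioi (0 : ℝ),
      -(deriv (deriv φ) r) - deriv φ r / r =
        Real.exp (Real.log (64 / (8 + r ^ 2) ^ 2)) *
          (φ r + α * β / 2 * Real.log (64 / (8 + r ^ 2) ^ 2))) :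
    ∀ r ∈ Set.Ici (0 : ℝ),
      φ r = α * β * (Real.log (8 + r ^ 2) + 8 / (8 + r ^ 2) - 1 - Real.log 8) := by
  have hsol : IsRadialSolution bubble ((α * β) • fun r => -(bubble r * log (bubble r)) / 2)
      φ (deriv φ) := by
    refine .of_contDiffOn hφ fun r hr => ?_
    have h := heq r hr
    rw [exp_log (by positivity)] at h
    simp only [Pi.smul_apply, smul_eq_mul, bubble]
    linear_combination -h
  obtain ⟨a, b, h₁, h₁'⟩ := exists_regularSol_singularSol_eq
    (φ 1 - α * β * particularSol 1) (deriv φ 1 - α * β * particularSol' 1)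
  have hψ : IsRadialSolution bubble ((α * β) • fun r => -(bubble r * log (bubble r)) / 2)
      ((α * β) • particularSol + (a • regularSol + b • singularSol))
      ((α * β) • particularSol' + (a • regularSol' + b • singularSol')) := by
    convert (isRadialSolution_particularSol.const_smul (α * β)).add
      ((isRadialSolution_regularSol.const_smul a).add (isRadialSolution_singularSol.const_smul b))
      using 1
    simp
  have hrep := hsol.eqOn continuous_bubble.continuousOn hψ one_pos
    (by simp only [Pi.add_apply, Pi.smul_apply, smul_eq_mul]; linarith)
    (by simp only [Pi.add_apply, Pi.smul_apply, smul_eq_mul]; linarith)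
  have hlim : Tendsto (fun r => a * regularSol r + b * singularSol r) (𝓝[>] 0) (𝓝 0) := by
    have hφ0 : Tendsto φ (𝓝[>] 0) (𝓝 0) := by
      simpa [h0] using hcont.tendsto.mono_left (nhdsWithin_mono 0 Ioi_subset_Ici_self)
    have hψ0 : Tendsto (fun r => α * β * particularSol r) (𝓝[>] 0) (𝓝 (α * β * 0)) :=
      ((continuous_particularSol.tendsto' 0 0 particularSol_zero).mono_left
        nhdsWithin_le_nhds).const_mul (α * β)
    refine ((hφ0.sub hψ0).congr' ?_).trans (by simp)
    filter_upwards [self_mem_nhdsWithin] with r hr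
    simp only [hrep hr, Pi.add_apply, Pi.smul_apply, smul_eq_mul]
    ring
  obtain ⟨rfl, rfl⟩ := eq_zero_of_tendsto_regularSol_singularSol hlim
  intro r hr
  rcases (mem_Ici.1 hr).eq_or_lt with rfl | hr
  · simp [h0]
  · simp [hrep hr, particularSol]

theorem stmt_8 (α β : ℝ) (hα : 0 < α) (hβ : 0 < β) (φ : ℝ → ℝ)
    (hφ : ContDiffOn ℝ 2 φ (Set.Ioi (0 : ℝ)))
    (hcont : ContinuousWithinAt φ (Set.Ici (0 : ℝ)) 0)
    (h0 : φ 0 = 0)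
    (heq : ∀ r ∈ Set.Ioi (0 : ℝ),
      -(deriv (deriv φ) r) - deriv φ r / r =
        Real.exp (Real.log (64 / (8 + r ^ 2) ^ 2)) *
          (φ r + α * β / 2 * Real.log (64 / (8 + r ^ 2) ^ 2))) :
    ∀ r ∈ Set.Ici (0 : ℝ),
      φ r = α * β * (Real.log (8 + r ^ 2) + 8 / (8 + r ^ 2) - 1 - Real.log 8) :=
  stmt_8_general α β φ hφ hcont h0 heq
end

section
/- The general solution of the homogeneous linear ODE -ψ'' - ψ'/r = e^{z} ψ on (0,∞), where z(r) = log(64/(8+r²)²), is ψ(r) = c₁ (8−r²)/(8+r²) + c₂ ((8−r²) log r + 16)/(8+r²) for constants c₁, c₂ ∈ ℝ; equivalently, any C² solution ψ on (0,∞) with limit 0 as r → 0⁺ is identically zero. -/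
/-!
Writing the equation as `(r ψ')' + r e^z ψ = 0`, it has the explicit solutions
`u₁ = (8 - r²)/(8 + r²)`, which comes from the scaling invariance of the Liouville equation, and
`u₂ = u₁ log r + 1`, found by reduction of order; `r (u₁ u₂' - u₁' u₂) = 1`. By Abel's identity,
`r` times the Wronskian of any two solutions is constant, so Cramer's rule writes every solution as
`a u₁ + b u₂`. As `r → 0⁺`, `u₁ → 1` while `u₂ → -∞`, so a solution tending to `0` has `b = 0`
and then `a = 0`.
-/

open Filter Set Real Topology

theorem hasDerivAt_mul_wronskian {p f f' g g' : ℝ → ℝ} {x dp f'' g'' q : ℝ}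
    (hp : HasDerivAt p dp x) (hf : HasDerivAt f (f' x) x) (hf' : HasDerivAt f' f'' x)
    (hg : HasDerivAt g (g' x) x) (hg' : HasDerivAt g' g'' x)
    (hfeq : p x * f'' + dp * f' x + q * f x = 0) (hgeq : p x * g'' + dp * g' x + q * g x = 0) :
    HasDerivAt (fun y ↦ p y * (f y * g' y - f' y * g y)) 0 x :=
  (hp.mul ((hf.mul hg').sub (hf'.mul hg))).congr_deriv
    (by simp only [Pi.mul_apply, Pi.sub_apply]; linear_combination f x * hgeq - g x * hfeq)

theorem IsOpen.exists_mul_wronskian_eq_const {s : Set ℝ} (hs : IsOpen s) (hs' : IsPreconnected s)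
    {p p' q f f' f'' g g' g'' : ℝ → ℝ} (hp : ∀ x ∈ s, HasDerivAt p (p' x) x)
    (hf : ∀ x ∈ s, HasDerivAt f (f' x) x) (hf' : ∀ x ∈ s, HasDerivAt f' (f'' x) x)
    (hg : ∀ x ∈ s, HasDerivAt g (g' x) x) (hg' : ∀ x ∈ s, HasDerivAt g' (g'' x) x)
    (hfeq : ∀ x ∈ s, p x * f'' x + p' x * f' x + q x * f x = 0)
    (hgeq : ∀ x ∈ s, p x * g'' x + p' x * g' x + q x * g x = 0) :
    ∃ C, ∀ x ∈ s, p x * (f x * g' x - f' x * g x) = C := by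
  have hW : ∀ x ∈ s, HasDerivAt (fun y ↦ p y * (f y * g' y - f' y * g y)) 0 x := fun x hx ↦
    hasDerivAt_mul_wronskian (hp x hx) (hf x hx) (hf' x hx) (hg x hx) (hg' x hx)
      (hfeq x hx) (hgeq x hx)
  exact hs.exists_is_const_of_deriv_eq_zero hs'
    (fun x hx ↦ (hW x hx).differentiableAt.differentiableWithinAt) (fun x hx ↦ (hW x hx).deriv)

namespace LinearizedLiouville

noncomputable def u₁ (r : ℝ) : ℝ := (8 - r ^ 2) / (8 + r ^ 2)
noncomputable def u₁' (r : ℝ) : ℝ := -32 * r / (8 + r ^ 2) ^ 2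
noncomputable def u₁'' (r : ℝ) : ℝ := (96 * r ^ 2 - 256) / (8 + r ^ 2) ^ 3

noncomputable def u₂ (r : ℝ) : ℝ := u₁ r * log r + 1
noncomputable def u₂' (r : ℝ) : ℝ := u₁' r * log r + u₁ r / r
noncomputable def u₂'' (r : ℝ) : ℝ := u₁'' r * log r + 2 * u₁' r / r - u₁ r / r ^ 2

lemma hasDerivAt_u₁ (r : ℝ) : HasDerivAt u₁ (u₁' r) r := by
  have h : 8 + r ^ 2 ≠ 0 := by positivity
  refine (((hasDerivAt_pow 2 r).const_sub 8).div ((hasDerivAt_pow 2 r).const_add 8) h).congr_deriv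
    ?_
  rw [u₁']
  field_simp
  ring

lemma hasDerivAt_u₁' (r : ℝ) : HasDerivAt u₁' (u₁'' r) r := by
  have h : (8 + r ^ 2) ^ 2 ≠ 0 := by positivity
  refine (((hasDerivAt_id r).const_mul (-32)).div
    (((hasDerivAt_pow 2 r).const_add 8).pow 2) h).congr_deriv ?_
  simp only [u₁'', id, Pi.pow_apply]
  field_simp
  ring

lemma hasDerivAt_u₂ {r : ℝ} (hr : r ≠ 0) : HasDerivAt u₂ (u₂' r) r := by
  refine (((hasDerivAt_u₁ r).mul (hasDerivAt_log hr)).add_const 1).congr_deriv ?_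
  rw [u₂']
  field_simp

lemma hasDerivAt_u₂' {r : ℝ} (hr : r ≠ 0) : HasDerivAt u₂' (u₂'' r) r := by
  refine (((hasDerivAt_u₁' r).mul (hasDerivAt_log hr)).add
    ((hasDerivAt_u₁ r).div (hasDerivAt_id r) hr)).congr_deriv ?_
  simp only [u₂'', id]
  field_simp
  ring

lemma u₁_ode (r : ℝ) : r * u₁'' r + 1 * u₁' r + r * (64 / (8 + r ^ 2) ^ 2) * u₁ r = 0 := by
  simp only [u₁, u₁', u₁'']
  field_simp
  ring

lemma u₂_ode {r : ℝ} (hr : r ≠ 0) :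
    r * u₂'' r + 1 * u₂' r + r * (64 / (8 + r ^ 2) ^ 2) * u₂ r = 0 := by
  have h : 2 * u₁' r + r * (64 / (8 + r ^ 2) ^ 2) = 0 := by
    rw [u₁']
    field_simp
    ring
  have hr₁ : r * (1 / r) = 1 := by field_simp
  have hr₂ : r * (1 / r ^ 2) = 1 / r := by field_simp
  simp only [u₂, u₂', u₂'']
  linear_combination log r * u₁_ode r + h + 2 * u₁' r * hr₁ - u₁ r * hr₂

lemma mul_wronskian_u₁_u₂ {r : ℝ} (hr : r ≠ 0) : r * (u₁ r * u₂' r - u₁' r * u₂ r) = 1 := by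
  simp only [u₁, u₁', u₂, u₂']
  field_simp
  ring

theorem exists_eq_mul_u₁_add_mul_u₂ {ψ ψ' ψ'' : ℝ → ℝ}
    (hψ : ∀ r ∈ Ioi (0 : ℝ), HasDerivAt ψ (ψ' r) r)
    (hψ' : ∀ r ∈ Ioi (0 : ℝ), HasDerivAt ψ' (ψ'' r) r)
    (hode : ∀ r ∈ Ioi (0 : ℝ), r * ψ'' r + 1 * ψ' r + r * (64 / (8 + r ^ 2) ^ 2) * ψ r = 0) :
    ∃ a b : ℝ, ∀ r ∈ Ioi (0 : ℝ), ψ r = a * u₁ r + b * u₂ r := by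
  have hp : ∀ r ∈ Ioi (0 : ℝ), HasDerivAt (fun r ↦ r) 1 r := fun r _ ↦ hasDerivAt_id' r
  obtain ⟨A, hA⟩ := isOpen_Ioi.exists_mul_wronskian_eq_const isPreconnected_Ioi hp
    (fun r _ ↦ hasDerivAt_u₁ r) (fun r _ ↦ hasDerivAt_u₁' r) hψ hψ' (fun r _ ↦ u₁_ode r) hode
  obtain ⟨B, hB⟩ := isOpen_Ioi.exists_mul_wronskian_eq_const isPreconnected_Ioi hp
    hψ hψ' (fun r hr ↦ hasDerivAt_u₂ hr.ne') (fun r hr ↦ hasDerivAt_u₂' hr.ne') hode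
    (fun r hr ↦ u₂_ode hr.ne')
  refine ⟨B, A, fun r hr ↦ ?_⟩
  -- Cramer's rule for the vectors (ψ, ψ'), (u₁, u₁'), (u₂, u₂')
  linear_combination -ψ r * mul_wronskian_u₁_u₂ hr.ne' + u₁ r * hB r hr + u₂ r * hA r hr

lemma tendsto_u₁ : Tendsto u₁ (𝓝 0) (𝓝 1) := by
  simpa [u₁] using (hasDerivAt_u₁ 0).continuousAt.tendsto

lemma tendsto_u₂ : Tendsto u₂ (𝓝[>] 0) atBot :=
  tendsto_atBot_add_const_right _ 1 <|
    (tendsto_u₁.mono_left nhdsWithin_le_nhds).pos_mul_atBot one_pos tendsto_log_nhdsGT_zero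

theorem eq_zero_of_tendsto_mul_u₁_add_mul_u₂ {a b : ℝ}
    (h : Tendsto (fun r ↦ a * u₁ r + b * u₂ r) (𝓝[>] 0) (𝓝 0)) : a = 0 ∧ b = 0 := by
  have ha : Tendsto (fun r ↦ a * u₁ r) (𝓝[>] 0) (𝓝 a) := by
    simpa using (tendsto_u₁.mono_left nhdsWithin_le_nhds).const_mul a
  have hb : b = 0 := by
    by_contra hb
    refine not_tendsto_nhds_of_tendsto_atBot tendsto_u₂ ((0 - a) / b) ?_
    refine ((h.sub ha).div_const b).congr fun r ↦ ?_
    field_simp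
    ring
  subst hb
  exact ⟨tendsto_nhds_unique ha (by simpa using h), rfl⟩

end LinearizedLiouville

open LinearizedLiouville

theorem stmt_9 (ψ : ℝ → ℝ)
    (hψ : ContDiffOn ℝ 2 ψ (Set.Ioi (0 : ℝ)))
    (heq : ∀ r ∈ Set.Ioi (0 : ℝ),
      -(deriv (deriv ψ) r) - deriv ψ r / r = 64 / (8 + r ^ 2) ^ 2 * ψ r)
    (hlim : Tendsto ψ (nhdsWithin 0 (Set.Ioi (0 : ℝ))) (nhds 0)) :
    ∀ r ∈ Set.Ioi (0 : ℝ), ψ r = 0 := by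
  have hψ' : ContDiffOn ℝ 1 (deriv ψ) (Ioi 0) := hψ.deriv_of_isOpen isOpen_Ioi (by norm_num)
  obtain ⟨a, b, hab⟩ := exists_eq_mul_u₁_add_mul_u₂
    (fun r hr ↦ ((hψ.differentiableOn (by norm_num)).differentiableAt
      (isOpen_Ioi.mem_nhds hr)).hasDerivAt)
    (fun r hr ↦ ((hψ'.differentiableOn (by norm_num)).differentiableAt
      (isOpen_Ioi.mem_nhds hr)).hasDerivAt)
    (fun r hr ↦ by linear_combination -r * heq r hr - mul_div_cancel₀ (deriv ψ r) hr.ne')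
  obtain ⟨rfl, rfl⟩ :=
    eq_zero_of_tendsto_mul_u₁_add_mul_u₂ (hlim.congr' (eventually_nhdsWithin_of_forall hab))
  simpa using hab
end

section
/- Let f(t) = t e^{t² + |t|} and F(t) = ∫₀^t f(s) ds. For every ε > 0 there exists t_ε > 0 such that ε f(t) t − F(t) ≥ 0 for all t ∈ ℝ with |t| ≥ t_ε. -/
/-! On `[0, t]` the integrand `s e^{s² + s}` is dominated by `(s + 1/2) e^{s² + s}`, the derivative
of `e^{s² + s} / 2`, so `F t ≤ e^{t² + |t|} / 2` for `t ≥ 0`, and for all `t` because `f` is odd and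
hence `F` even. Since `ε f(t) t = ε t² e^{t² + |t|}`, it suffices that `ε t² ≥ 1/2`. -/

open Real intervalIntegral

theorem Function.Odd.integral_zero_neg {E : Type*} [NormedAddCommGroup E] [NormedSpace ℝ E]
    {f : ℝ → E} (hf : f.Odd) (t : ℝ) :
    ∫ s in (0 : ℝ)..-t, f s = ∫ s in (0 : ℝ)..t, f s := by
  have h := integral_comp_neg (a := 0) (b := t) f
  simp only [show ∀ x, f (-x) = -f x from hf, integral_neg, neg_zero] at h
  rw [integral_symm, ← h, neg_neg]

lemma integral_mul_exp_sq_add_abs_le_of_nonneg {t : ℝ} (ht : 0 ≤ t) :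
    ∫ s in (0 : ℝ)..t, s * exp (s ^ 2 + |s|) ≤ exp (t ^ 2 + t) / 2 := by
  have hderiv (s : ℝ) :
      HasDerivAt (fun u => exp (u ^ 2 + u) / 2) ((2 * s + 1) * exp (s ^ 2 + s) / 2) s :=
    ((((hasDerivAt_pow 2 s).fun_add (hasDerivAt_id' s)).exp).div_const 2).congr_deriv (by ring)
  calc ∫ s in (0 : ℝ)..t, s * exp (s ^ 2 + |s|)
      ≤ exp (t ^ 2 + t) / 2 - exp (0 ^ 2 + 0) / 2 :=
        integral_le_sub_of_hasDeriv_right_of_le ht (by fun_prop)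
          (fun s _ => (hderiv s).hasDerivWithinAt)
          (Continuous.integrableOn_Icc (by fun_prop))
          (fun s hs => by
            rw [abs_of_pos hs.1]
            nlinarith [exp_pos (s ^ 2 + s)])
    _ ≤ exp (t ^ 2 + t) / 2 := by simp

lemma integral_mul_exp_sq_add_abs_le (t : ℝ) :
    ∫ s in (0 : ℝ)..t, s * exp (s ^ 2 + |s|) ≤ exp (t ^ 2 + |t|) / 2 := by
  have hodd : Function.Odd fun s : ℝ => s * exp (s ^ 2 + |s|) := fun s => by
    simp only [neg_sq, abs_neg, neg_mul]
  rcases le_total 0 t with ht | ht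
  · simpa only [abs_of_nonneg ht] using integral_mul_exp_sq_add_abs_le_of_nonneg ht
  · have h := integral_mul_exp_sq_add_abs_le_of_nonneg (neg_nonneg.mpr ht)
    rwa [hodd.integral_zero_neg, neg_sq, ← abs_of_nonpos ht] at h

theorem stmt_12 (f F : ℝ → ℝ)
    (hf : ∀ t : ℝ, f t = t * Real.exp (t ^ 2 + |t|))
    (hF : ∀ t : ℝ, F t = ∫ s in (0 : ℝ)..t, f s) :
    ∀ ε > 0, ∃ tε > 0, ∀ t : ℝ, tε ≤ |t| → 0 ≤ ε * f t * t - F t := by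
  obtain rfl : f = fun t => t * exp (t ^ 2 + |t|) := funext hf
  intro ε hε
  refine ⟨1 + ε⁻¹, by positivity, fun t ht => ?_⟩
  have hεt : 1 ≤ ε * t ^ 2 := by
    have : ε + 1 ≤ ε * |t| := by
      simpa [mul_add, hε.ne'] using mul_le_mul_of_nonneg_left ht hε.le
    nlinarith [sq_abs t, abs_nonneg t]
  rw [hF]
  nlinarith [integral_mul_exp_sq_add_abs_le t, exp_pos (t ^ 2 + |t|)]
end
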